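/- Let n ≥ 1. For each of Green's relations K ∈ {R, L, J, H, D}, and for all α, β ∈ P_n and i, j ∈ ℕ: (i,α) K (j,β) holds in P_n^Φ if and only if i = j and α K β holds in P_n. Moreover, the D-classes of P_n^Φ coincide with its J-classes and are precisely the sets D_{qi} := {i} × D_q for 0 ≤ q ≤ n and i ∈ ℕ; the principal ideal of P_n^Φ generated by any element of D_{qi} is I_{qi} := {i, i+1, i+2, …} × I_q; and I_{qi} ⊆ I_{rj} if and only if q ≤ r and i ≥ j. -/

import Mathlib

/-!
The product `αβ` and the number `Φ(α, β)` are read off the three-row graph `Γ(α, β)`, and both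
`(αβ)γ` and `α(βγ)` are read off one four-row graph `Γ(α, β, γ)`. Counting the components of
`Γ(α, β, γ)` inside its two middle rows in two ways gives `Φ(α,β) + Φ(αβ,γ) = Φ(β,γ) + Φ(α,βγ)`,
so `P_n^Φ` is a monoid whose first coordinate never decreases under multiplication.

Floating components can always be avoided: if `αγ = β` then also `αγ' = β` with `Φ(α, γ') = 0`.
So every divisibility in `P_n` lifts to `P_n^Φ` at no cost in the first coordinate, which reduces
each of Green's relations on `P_n^Φ` to equality of first coordinates plus the relation on `P_n`.
In `P_n`, `β ∈ P_n α P_n` exactly when `rank β ≤ rank α`, and since `P_n` is finite, `J`-related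
elements are `D`-related.
-/

namespace TPM

/-- Vertex set `{1,…,n} ∪ {1',…,n'}`: `Sum.inl` = unprimed (upper row),
`Sum.inr` = primed (lower row). -/
abbrev V (n : ℕ) := Fin n ⊕ Fin n

/-- The partition monoid `P_n`: set partitions of the `2n`-element set `V n`,
encoded as equivalence relations (setoids). -/
abbrev PM (n : ℕ) := Setoid (V n)

/-- Three-row vertex set of the product graph: top / middle / bottom. -/
abbrev W (n : ℕ) := Fin n ⊕ (Fin n ⊕ Fin n)

variable {n : ℕ}

/-- First factor: unprimed ↦ top, primed ↦ middle. -/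
def topMid : V n → W n
  | Sum.inl i => Sum.inl i
  | Sum.inr i => Sum.inr (Sum.inl i)

/-- Second factor: unprimed ↦ middle, primed ↦ bottom. -/
def midBot : V n → W n
  | Sum.inl i => Sum.inr (Sum.inl i)
  | Sum.inr i => Sum.inr (Sum.inr i)

/-- Embedding of `V n` as top and bottom rows of the three-row set. -/
def topBot : V n → W n
  | Sum.inl i => Sum.inl i
  | Sum.inr i => Sum.inr (Sum.inr i)

/-- Edge relation of the product graph `Γ(α,β)`. -/
def graphRel (α β : PM n) (x y : W n) : Prop :=
  (∃ u v : V n, α.r u v ∧ x = topMid u ∧ y = topMid v) ∨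
  (∃ u v : V n, β.r u v ∧ x = midBot u ∧ y = midBot v)

/-- Connectivity (equivalence closure of the edge relation) in `Γ(α,β)`. -/
def conn (α β : PM n) : W n → W n → Prop := Relation.EqvGen (graphRel α β)

/-- Connectivity in `Γ(α,β)`, as a setoid on the three-row vertex set. -/
def connSetoid (α β : PM n) : Setoid (W n) :=
  ⟨conn α β, Relation.EqvGen.is_equivalence _⟩

/-- The product of two partitions: `x,y` lie in the same block of `αβ` iff they are
connected in `Γ(α,β)`. -/
def pmul (α β : PM n) : PM n :=
  ⟨fun x y => conn α β (topBot x) (topBot y),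
    ⟨fun _ => Relation.EqvGen.refl _, fun h => Relation.EqvGen.symm _ _ h, fun h h' => Relation.EqvGen.trans _ _ _ h h'⟩⟩

/-- A vertex of the three-row set lies in the middle row. -/
def isMid (x : W n) : Prop := ∃ i : Fin n, x = Sum.inr (Sum.inl i)

/-- `Φ(α,β)`: the number of floating components of `Γ(α,β)`, i.e. connected components
all of whose vertices lie in the middle row. -/
noncomputable def Phi (α β : PM n) : ℕ :=
  Nat.card {c : Quotient (connSetoid α β) //
    ∀ x : W n, Quotient.mk (connSetoid α β) x = c → isMid x}

/-- The rank of a partition: the number of transversal blocks (blocks containing both an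
unprimed and a primed element). -/
noncomputable def rnk (α : PM n) : ℕ :=
  Nat.card {c : Quotient α //
    (∃ i : Fin n, Quotient.mk α (Sum.inl i) = c) ∧ ∃ i : Fin n, Quotient.mk α (Sum.inr i) = c}

/-- Which row of `V n` a point lies in. -/
def side : V n → Bool
  | Sum.inl _ => true
  | Sum.inr _ => false

/-- `α̂`: split each transversal of `α` into its unprimed part and its primed part. -/
def hat (α : PM n) : PM n :=
  ⟨fun x y => α.r x y ∧ side x = side y,
    ⟨fun x => ⟨α.iseqv.refl x, rfl⟩,
     fun h => ⟨α.iseqv.symm h.1, h.2.symm⟩,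
     fun h h' => ⟨α.iseqv.trans h.1 h'.1, h.2.trans h'.2⟩⟩⟩

/-- The twisted product on `ℕ × P_n`:  `(i,α)(j,β) = (i + j + Φ(α,β), αβ)`. -/
noncomputable def tmul (a b : ℕ × PM n) : ℕ × PM n :=
  (a.1 + b.1 + Phi a.2 b.2, pmul a.2 b.2)

/-- A congruence on a set equipped with a binary operation: an equivalence relation
compatible with the operation on both sides. -/
def IsCongruence {M : Type*} (mul : M → M → M) (σ : M → M → Prop) : Prop :=
  Equivalence σ ∧ ∀ x y a, σ x y → σ (mul a x) (mul a y) ∧ σ (mul x a) (mul y a)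

/-- Green's relation `R`: equality of the right ideals `xM = yM`. -/
def greenR {M : Type*} (mul : M → M → M) (x y : M) : Prop :=
  Set.range (mul x) = Set.range (mul y)

/-- Green's relation `L`: `Mx = My`. -/
def greenL {M : Type*} (mul : M → M → M) (x y : M) : Prop :=
  Set.range (fun a => mul a x) = Set.range (fun a => mul a y)

/-- The principal two-sided ideal `MxM`. -/
def jSet {M : Type*} (mul : M → M → M) (x : M) : Set M :=
  Set.range (fun p : M × M => mul (mul p.1 x) p.2)

/-- Green's relation `J`: `MxM = MyM`. -/
def greenJ {M : Type*} (mul : M → M → M) (x y : M) : Prop :=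
  jSet mul x = jSet mul y

/-- Green's relation `H = R ∩ L`. -/
def greenH {M : Type*} (mul : M → M → M) (x y : M) : Prop :=
  greenR mul x y ∧ greenL mul x y

/-- Green's relation `D = R ∘ L`. -/
def greenD {M : Type*} (mul : M → M → M) (x y : M) : Prop :=
  ∃ z, greenR mul x z ∧ greenL mul z y

/-- `pd(α,β)` satisfies `P`, where `α` has `p` transversals: there are representatives
`a s` of the upper parts of the `p` (pairwise distinct) transversals of `α`, with `b s`
representing the corresponding lower parts, and a permutation `π` with `P π` such that the
block of `β` containing `a s` contains `b (π s)`.  (For H-related `α, β ∈ D_p` this says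
exactly that some representation of the permutational difference `pd(α,β)` satisfies `P`.) -/
def pdIn (p : ℕ) (P : Equiv.Perm (Fin p) → Prop) (α β : PM n) : Prop :=
  ∃ (a b : Fin p → Fin n) (π : Equiv.Perm (Fin p)),
    (∀ s t, α.r (Sum.inl (a s)) (Sum.inl (a t)) → s = t) ∧
    (∀ s, α.r (Sum.inl (a s)) (Sum.inr (b s))) ∧
    (∀ s, β.r (Sum.inl (a s)) (Sum.inr (b (π s)))) ∧
    P π

/-- The relation `ν_N` on `D_p`, for a subgroup `N ≤ S_p`:  H-related pairs of rank-`p`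
partitions whose permutational difference lies in `N`. -/
def nuRel (p : ℕ) (N : Subgroup (Equiv.Perm (Fin p))) (α β : PM n) : Prop :=
  rnk α = p ∧ rnk β = p ∧ greenH pmul α β ∧ pdIn p (· ∈ N) α β

/-- The congruence `(m, m+d)^♯` on the additive monoid `ℕ` (intended for `d ≥ 1`). -/
def natCong (m d : ℕ) (i j : ℕ) : Prop :=
  i = j ∨ (m ≤ i ∧ m ≤ j ∧ i % d = j % d)

/-- `min θ ≤ i` for a congruence `θ` on `ℕ` (with `min Δ_ℕ = ∞`). -/
def minLE (θ : ℕ → ℕ → Prop) (i : ℕ) : Prop :=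
  ∃ a b, θ a b ∧ a ≠ b ∧ a ≤ i

/-- `k ≤ min θ` for a congruence `θ` on `ℕ` (with `min Δ_ℕ = ∞`). -/
def leMin (k : ℕ) (θ : ℕ → ℕ → Prop) : Prop :=
  ∀ a b, θ a b → a ≠ b → k ≤ a

/-- The possible entries of a C-matrix. -/
inductive CEntry : Type
  | delta | muUp | muDown | mu | lam | rho | R
  | nsym (q : ℕ) (N : Subgroup (Equiv.Perm (Fin q)))

/-- Whether a C-matrix entry is an N-symbol. -/
def isNsym : CEntry → Prop
  | CEntry.nsym _ _ => True
  | _ => False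

/-- The allowed values of the symbol `ζ` in row types RT2, RT5, RT6. -/
def isZeta (e : CEntry) : Prop :=
  e = CEntry.mu ∨ e = CEntry.muUp ∨ e = CEntry.muDown ∨ e = CEntry.delta

/-- The allowed values of the symbol `ξ` in row types RT4–RT7: any of `μ,ρ,λ,R` if
`d = 1`, and only `μ` if `d > 1`. -/
def xiOK (d : ℕ) (e : CEntry) : Prop :=
  e = CEntry.mu ∨ (d = 1 ∧ (e = CEntry.rho ∨ e = CEntry.lam ∨ e = CEntry.R))

/-- Row type RT1 for rows 0 and 1: all entries `Δ`. -/
def RT1 (M0 M1 : ℕ → CEntry) : Prop :=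
  (∀ i, M0 i = CEntry.delta) ∧ (∀ i, M1 i = CEntry.delta)

/-- Row type RT2. -/
def RT2 (Θ0 Θ1 : ℕ → ℕ → Prop) (M0 M1 : ℕ → CEntry) : Prop :=
  Θ0 = Eq ∧ Θ1 = Eq ∧
  ∃ i ζ, isZeta ζ ∧
    (∀ j, j < i → M0 j = CEntry.delta) ∧ (∀ j, i ≤ j → M0 j = CEntry.mu) ∧
    (∀ j, j < i → M1 j = CEntry.delta) ∧ M1 i = ζ ∧ (∀ j, i < j → M1 j = CEntry.mu)

/-- Row type RT3. -/
def RT3 (Θ0 : ℕ → ℕ → Prop) (M0 M1 : ℕ → CEntry) : Prop :=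
  ∃ m ξ, Θ0 = natCong m 1 ∧ (ξ = CEntry.rho ∨ ξ = CEntry.lam ∨ ξ = CEntry.R) ∧
    (∀ i, M1 i = CEntry.delta) ∧
    (∀ j, j < m → M0 j = CEntry.delta) ∧ (∀ j, m ≤ j → M0 j = ξ)

/-- Row type RT4. -/
def RT4 (Θ0 Θ1 : ℕ → ℕ → Prop) (M0 M1 : ℕ → CEntry) : Prop :=
  ∃ m d ξ, 1 ≤ d ∧ Θ0 = natCong m d ∧ Θ1 = natCong m d ∧ xiOK d ξ ∧
    (∀ j, j < m → M0 j = CEntry.delta ∧ M1 j = CEntry.delta) ∧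
    (∀ j, m ≤ j → M0 j = ξ ∧ M1 j = ξ)

/-- Row type RT5. -/
def RT5 (Θ0 Θ1 : ℕ → ℕ → Prop) (M0 M1 : ℕ → CEntry) : Prop :=
  ∃ m d i ξ ζ, 1 ≤ d ∧ i < m ∧ Θ0 = natCong m d ∧ Θ1 = natCong (m + 1) d ∧
    xiOK d ξ ∧ isZeta ζ ∧
    (∀ j, j < i → M0 j = CEntry.delta) ∧ (∀ j, i ≤ j → j < m → M0 j = CEntry.mu) ∧
    (∀ j, m ≤ j → M0 j = ξ) ∧
    (∀ j, j < i → M1 j = CEntry.delta) ∧ M1 i = ζ ∧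
    (∀ j, i < j → j ≤ m → M1 j = CEntry.mu) ∧ (∀ j, m < j → M1 j = ξ)

/-- Row type RT6. -/
def RT6 (Θ0 Θ1 : ℕ → ℕ → Prop) (M0 M1 : ℕ → CEntry) : Prop :=
  ∃ m l d ξ ζ, 1 ≤ d ∧ m < l ∧ Θ0 = natCong m d ∧ Θ1 = natCong l d ∧
    xiOK d ξ ∧ isZeta ζ ∧
    (∀ j, j < m → M0 j = CEntry.delta) ∧ (∀ j, m ≤ j → M0 j = ξ) ∧
    (∀ j, j < l - 1 → M1 j = CEntry.delta) ∧ M1 (l - 1) = ζ ∧ (∀ j, l ≤ j → M1 j = ξ)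

/-- Row type RT7. -/
def RT7 (Θ0 Θ1 : ℕ → ℕ → Prop) (M0 M1 : ℕ → CEntry) : Prop :=
  ∃ m l d ξ, 1 ≤ d ∧ 0 < m ∧ m + 1 < l ∧ (l - 1) % d = m % d ∧
    Θ0 = natCong m d ∧ Θ1 = natCong l d ∧ xiOK d ξ ∧
    (∀ j, j < m - 1 → M0 j = CEntry.delta) ∧ M0 (m - 1) = CEntry.mu ∧
    (∀ j, m ≤ j → M0 j = ξ) ∧
    (∀ j, j < l - 1 → M1 j = CEntry.delta) ∧ M1 (l - 1) = CEntry.mu ∧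
    (∀ j, l ≤ j → M1 j = ξ)

/-- Row type RT8 for a row `q ≥ 2`: all entries `Δ`. -/
def RT8 (Mq : ℕ → CEntry) : Prop := ∀ i, Mq i = CEntry.delta

/-- Row type RT9 for a row `q ≥ 2`. -/
def RT9 (q : ℕ) (Θq : ℕ → ℕ → Prop) (Mq : ℕ → CEntry) : Prop :=
  ∃ (i k : ℕ) (Ns : ℕ → Subgroup (Equiv.Perm (Fin q))),
    i ≤ k ∧ leMin k Θq ∧
    (∀ j, i ≤ j → j ≤ k → Ns j ≠ ⊥ ∧ (Ns j).Normal) ∧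
    (∀ j j', i ≤ j → j ≤ j' → j' ≤ k → Ns j ≤ Ns j') ∧
    (∀ j, j < i → Mq j = CEntry.delta) ∧
    (∀ j, i ≤ j → j < k → Mq j = CEntry.nsym q (Ns j)) ∧
    (∀ j, k ≤ j → Mq j = CEntry.nsym q (Ns k))

/-- Row type RT10 for a row `q ≥ 2`. -/
def RT10 (q : ℕ) (Θq : ℕ → ℕ → Prop) (Mq : ℕ → CEntry) : Prop :=
  ∃ (i m : ℕ) (Ns : ℕ → Subgroup (Equiv.Perm (Fin q))),
    i ≤ m ∧ Θq = natCong m 1 ∧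
    (∀ j, i ≤ j → j < m → Ns j ≠ ⊥ ∧ (Ns j).Normal) ∧
    (∀ j j', i ≤ j → j ≤ j' → j' < m → Ns j ≤ Ns j') ∧
    (∀ j, j < i → Mq j = CEntry.delta) ∧
    (∀ j, i ≤ j → j < m → Mq j = CEntry.nsym q (Ns j)) ∧
    (∀ j, m ≤ j → Mq j = CEntry.R)

/-- A C-pair for `P_n^Φ`: a descending chain `Θ = (θ_0 ⊇ ⋯ ⊇ θ_n)` of congruences on
`(ℕ,+)` together with a matrix `M = (M_{qi})`, `0 ≤ q ≤ n`, `i ∈ ℕ`, whose rows 0 and 1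
jointly have one of the types RT1–RT7, whose rows `q ≥ 2` have one of the types RT8–RT10,
and which satisfies the verticality conditions (V1) and (V2). -/
def IsCPair (n : ℕ) (Θ : ℕ → ℕ → ℕ → Prop) (M : ℕ → ℕ → CEntry) : Prop :=
  (∀ q, q ≤ n → IsCongruence (· + ·) (Θ q)) ∧
  (∀ q r, q ≤ r → r ≤ n → ∀ i j, Θ r i j → Θ q i j) ∧
  (RT1 (M 0) (M 1) ∨ RT2 (Θ 0) (Θ 1) (M 0) (M 1) ∨ RT3 (Θ 0) (M 0) (M 1) ∨
    RT4 (Θ 0) (Θ 1) (M 0) (M 1) ∨ RT5 (Θ 0) (Θ 1) (M 0) (M 1) ∨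
    RT6 (Θ 0) (Θ 1) (M 0) (M 1) ∨ RT7 (Θ 0) (Θ 1) (M 0) (M 1)) ∧
  (∀ q, 2 ≤ q → q ≤ n → (RT8 (M q) ∨ RT9 q (Θ q) (M q) ∨ RT10 q (Θ q) (M q))) ∧
  (∀ q i, 1 ≤ q → q ≤ n → isNsym (M q i) →
    ¬(M (q - 1) i = CEntry.delta ∨ M (q - 1) i = CEntry.muUp ∨
      M (q - 1) i = CEntry.muDown ∨ isNsym (M (q - 1) i))) ∧
  (∀ q i, 2 ≤ q → q ≤ n → M q i = CEntry.R → M (q - 1) i = CEntry.R)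

/-- The relation `cg(Θ,M)` on `P_n^Φ` associated with a C-pair `(Θ,M)`: conditions
(C1)–(C8). -/
def cg (n : ℕ) (Θ : ℕ → ℕ → ℕ → Prop) (M : ℕ → ℕ → CEntry)
    (a b : ℕ × PM n) : Prop :=
  -- (C1)
  (M (rnk a.2) a.1 = CEntry.delta ∧ M (rnk b.2) b.1 = CEntry.delta ∧
    Θ (rnk a.2) a.1 b.1 ∧ a.2 = b.2) ∨
  -- (C2)
  (M (rnk a.2) a.1 = CEntry.R ∧ M (rnk b.2) b.1 = CEntry.R) ∨
  -- (C3)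
  (∃ p N, M (rnk a.2) a.1 = CEntry.nsym p N ∧ M (rnk b.2) b.1 = CEntry.nsym p N ∧
    Θ (rnk a.2) a.1 b.1 ∧ rnk a.2 = p ∧ greenH pmul a.2 b.2 ∧ pdIn p (· ∈ N) a.2 b.2) ∨
  -- (C4)
  (M (rnk a.2) a.1 = CEntry.lam ∧ M (rnk b.2) b.1 = CEntry.lam ∧
    greenL pmul (hat a.2) (hat b.2)) ∨
  -- (C5)
  (M (rnk a.2) a.1 = CEntry.rho ∧ M (rnk b.2) b.1 = CEntry.rho ∧
    greenR pmul (hat a.2) (hat b.2)) ∨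
  -- (C6)
  (M (rnk a.2) a.1 = CEntry.muDown ∧ M (rnk b.2) b.1 = CEntry.muDown ∧
    hat a.2 = hat b.2 ∧ greenL pmul a.2 b.2) ∨
  -- (C7)
  (M (rnk a.2) a.1 = CEntry.muUp ∧ M (rnk b.2) b.1 = CEntry.muUp ∧
    hat a.2 = hat b.2 ∧ greenR pmul a.2 b.2) ∨
  -- (C8)
  (M (rnk a.2) a.1 = CEntry.mu ∧ M (rnk b.2) b.1 = CEntry.mu ∧
    hat a.2 = hat b.2 ∧
    ((rnk a.2 = rnk b.2 ∧ Θ (rnk a.2) a.1 b.1) ∨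
     (rnk a.2 ≠ rnk b.2 ∧ Θ 0 (a.1 + rnk b.2) (b.1 + rnk a.2) ∧
        ¬ minLE (Θ (rnk a.2)) a.1 ∧ ¬ minLE (Θ (rnk b.2)) b.1) ∨
     (rnk a.2 ≠ rnk b.2 ∧ Θ 0 (a.1 + rnk b.2) (b.1 + rnk a.2) ∧
        minLE (Θ (rnk a.2)) a.1 ∧ minLE (Θ (rnk b.2)) b.1)))

/-- The C-pair `(Θ,M)` is exceptional with exceptional row `q`, where
`θ_q = (m, m+2d)^♯`. -/
def ExcAt (n : ℕ) (Θ : ℕ → ℕ → ℕ → Prop) (M : ℕ → ℕ → CEntry) (q m d : ℕ) : Prop :=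
  2 ≤ q ∧ q ≤ n ∧ 1 ≤ d ∧ Θ q = natCong m (2 * d) ∧
  ((2 < q ∧ M q m = CEntry.nsym q (alternatingGroup (Fin q))) ∨
   (q = 2 ∧ M 2 m = CEntry.delta ∧
     (M 1 m = CEntry.mu ∨ M 1 m = CEntry.rho ∨ M 1 m = CEntry.lam ∨ M 1 m = CEntry.R) ∧
     (∀ i j, natCong m d i j → Θ 1 i j)))

/-- The exceptional congruence `cgx(Θ,M)` associated with an exceptional C-pair:
`cg(Θ,M)` together with the pairs of (C9). -/
def cgx (n : ℕ) (Θ : ℕ → ℕ → ℕ → Prop) (M : ℕ → ℕ → CEntry) (q m d : ℕ)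
    (a b : ℕ × PM n) : Prop :=
  cg n Θ M a b ∨
  (rnk a.2 = q ∧ rnk b.2 = q ∧ natCong m d a.1 b.1 ∧ ¬ Θ q a.1 b.1 ∧
    greenH pmul a.2 b.2 ∧ pdIn q (fun π => π ∉ alternatingGroup (Fin q)) a.2 b.2)

/-- The Rees relation of a subset `I`. -/
def rees {M : Type*} (I : Set M) (x y : M) : Prop := x = y ∨ (x ∈ I ∧ y ∈ I)

/-- A (possibly empty) ideal of `P_n^Φ`: `MIM ⊆ I`. -/
def tIdeal (n : ℕ) (I : Set (ℕ × PM n)) : Prop :=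
  ∀ a b x, x ∈ I → tmul (tmul a x) b ∈ I

/-- `I(σ)`: the union of all ideals `I` of `P_n^Φ` whose Rees congruence is contained
in `σ`. -/
def Isig (n : ℕ) (σ : (ℕ × PM n) → (ℕ × PM n) → Prop) : Set (ℕ × PM n) :=
  ⋃₀ {I | tIdeal n I ∧ ∀ x y, rees I x y → σ x y}

/-- The 0-twisted partition monoid `P_{n,0}^Φ`, carried by `Option (P_n)` with
`none` the zero element `✗`. -/
noncomputable def mul0 (a b : Option (PM n)) : Option (PM n) :=
  match a, b with
  | some α, some β => if Phi α β = 0 then some (pmul α β) else none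
  | _, _ => none

/-- `rank a ≤ q`, where `rank ✗ = -∞`. -/
def rnkLE (a : Option (PM n)) (q : ℕ) : Prop :=
  ∀ α, a = some α → rnk α ≤ q

/-- The Rees congruence `R_q` on `P_{n,0}^Φ`. -/
def ReesQ (q : ℕ) (a b : Option (PM n)) : Prop :=
  a = b ∨ (rnkLE a q ∧ rnkLE b q)

/-- Lift a relation on `P_n` to `P_{n,0}^Φ = P_n ∪ {✗}`. -/
def lift2 (r : PM n → PM n → Prop) (a b : Option (PM n)) : Prop :=
  ∃ α β, a = some α ∧ b = some β ∧ r α β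


section Green

variable {M : Type*} {mul : M → M → M}

local infixl:70 " ⋆ " => mul

lemma range_mul_mul_subset (assoc : ∀ a b c, a ⋆ b ⋆ c = a ⋆ (b ⋆ c)) (a b : M) :
    Set.range (mul (a ⋆ b)) ⊆ Set.range (mul a) := by
  rintro _ ⟨c, rfl⟩
  exact ⟨b ⋆ c, (assoc a b c).symm⟩

lemma range_mul_mul_subset' (assoc : ∀ a b c, a ⋆ b ⋆ c = a ⋆ (b ⋆ c)) (a b : M) :
    Set.range (fun c => c ⋆ (a ⋆ b)) ⊆ Set.range (fun c => c ⋆ b) := by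
  rintro _ ⟨c, rfl⟩
  exact ⟨c ⋆ a, assoc c a b⟩

/-- `a M` is the image of `a y M` under `x ⋆ _`, so the inclusion `a y M ⊆ a M` is an equality
in a finite semigroup. -/
lemma greenR_mul_right_of_eq [Finite M] (assoc : ∀ a b c, a ⋆ b ⋆ c = a ⋆ (b ⋆ c))
    {a x y : M} (h : x ⋆ a ⋆ y = a) : greenR mul a (a ⋆ y) := by
  refine (Set.eq_of_subset_of_ncard_le (range_mul_mul_subset assoc a y) ?_
    (Set.toFinite _)).symm
  calc (Set.range (mul a)).ncard ≤ (mul x '' Set.range (mul (a ⋆ y))).ncard := by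
        refine Set.ncard_le_ncard ?_ (Set.toFinite _)
        rintro _ ⟨c, rfl⟩
        exact ⟨a ⋆ y ⋆ c, ⟨c, rfl⟩, by rw [← assoc, ← assoc, h]⟩
    _ ≤ _ := Set.ncard_image_le (Set.toFinite _)

lemma greenL_mul_left_of_eq [Finite M] (assoc : ∀ a b c, a ⋆ b ⋆ c = a ⋆ (b ⋆ c))
    {a x y : M} (h : x ⋆ a ⋆ y = a) : greenL mul a (x ⋆ a) :=
  greenR_mul_right_of_eq (mul := fun a b => b ⋆ a) (fun a b c => (assoc c b a).symm)
    (by rw [← assoc, h])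

lemma greenD_of_mem_jSet [Finite M] (assoc : ∀ a b c, a ⋆ b ⋆ c = a ⋆ (b ⋆ c)) {x y : M}
    (hxy : x ∈ jSet mul y) (hyx : y ∈ jSet mul x) : greenD mul x y := by
  obtain ⟨⟨p, q⟩, hx⟩ := hxy
  obtain ⟨⟨r, s⟩, hy⟩ := hyx
  dsimp only at hx hy
  have hxrs : p ⋆ r ⋆ x ⋆ (s ⋆ q) = x :=
    calc p ⋆ r ⋆ x ⋆ (s ⋆ q) = p ⋆ (r ⋆ x ⋆ s) ⋆ q := by simp only [assoc]
      _ = x := by rw [hy, hx]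
  have hR := greenR_mul_right_of_eq assoc hxrs
  have hL := greenL_mul_left_of_eq assoc hxrs
  refine ⟨x ⋆ s, (range_mul_mul_subset assoc x s).antisymm' ?_, ?_⟩
  · rw [hR, ← assoc]
    exact range_mul_mul_subset assoc _ q
  · rw [← hy]
    refine Set.Subset.antisymm ?_ (by rw [assoc]; exact range_mul_mul_subset' assoc r _)
    rintro _ ⟨w, rfl⟩
    obtain ⟨w', hw'⟩ : ∃ w', w' ⋆ (p ⋆ r ⋆ x) = w ⋆ x := by
      rw [← Set.mem_range (f := fun c => c ⋆ (p ⋆ r ⋆ x)), ← hL]; exact ⟨w, rfl⟩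
    refine ⟨w' ⋆ p, ?_⟩
    calc w' ⋆ p ⋆ (r ⋆ x ⋆ s) = w' ⋆ (p ⋆ r ⋆ x) ⋆ s := by simp only [assoc]
      _ = w ⋆ (x ⋆ s) := by rw [hw', assoc]

lemma greenR_iff_exists (assoc : ∀ a b c, a ⋆ b ⋆ c = a ⋆ (b ⋆ c)) {e : M}
    (he : ∀ a, a ⋆ e = a) {x y : M} :
    greenR mul x y ↔ (∃ c, x ⋆ c = y) ∧ ∃ c, y ⋆ c = x := by
  refine ⟨fun h => ⟨?_, ?_⟩, fun ⟨⟨c, hc⟩, ⟨d, hd⟩⟩ => ?_⟩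
  · rw [← Set.mem_range, h]; exact ⟨e, he y⟩
  · rw [← Set.mem_range, ← h]; exact ⟨e, he x⟩
  · subst hc
    have hx := range_mul_mul_subset assoc (x ⋆ c) d
    rw [hd] at hx
    exact hx.antisymm (range_mul_mul_subset assoc x c)

lemma greenL_iff_exists (assoc : ∀ a b c, a ⋆ b ⋆ c = a ⋆ (b ⋆ c)) {e : M}
    (he : ∀ a, e ⋆ a = a) {x y : M} :
    greenL mul x y ↔ (∃ c, c ⋆ x = y) ∧ ∃ c, c ⋆ y = x :=
  greenR_iff_exists (mul := fun a b => b ⋆ a) (fun a b c => (assoc c b a).symm) he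

end Green

lemma eqvGen_invariant {X : Type*} {r : X → X → Prop} (hr : ∀ a b, r a b → r b a) {P : X → Prop}
    (hP : ∀ a b, r a b → P a → P b) {a b : X} (h : Relation.EqvGen r a b) : P a → P b := by
  suffices P a ↔ P b from this.1
  induction h with
  | rel a b hab => exact ⟨hP a b hab, hP b a (hr a b hab)⟩
  | refl => rfl
  | symm _ _ _ ih => exact ih.symm
  | trans _ _ _ _ _ ih₁ ih₂ => exact ih₁.trans ih₂

def ClassIn {X : Type*} (S : Setoid X) (P : X → Prop) (c : Quotient S) : Prop :=
  ∀ x, Quotient.mk S x = c → P x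

lemma classIn_mk_iff {X : Type*} {S : Setoid X} {P : X → Prop} {x : X} :
    ClassIn S P (Quotient.mk S x) ↔ ∀ y, S x y → P y :=
  forall_congr' fun _ => imp_congr_left (Quotient.eq.trans ⟨S.symm, S.symm⟩)

section ProductGraph

variable {α β : PM n} {x y z : W n}

lemma graphRel_symm (α β : PM n) (x y : W n) : graphRel α β x y → graphRel α β y x := by
  rintro (⟨u, v, h, rfl, rfl⟩ | ⟨u, v, h, rfl, rfl⟩)
  exacts [Or.inl ⟨v, u, α.symm h, rfl, rfl⟩, Or.inr ⟨v, u, β.symm h, rfl, rfl⟩]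

lemma conn.refl (α β : PM n) (x : W n) : conn α β x x := Relation.EqvGen.refl x

lemma conn.symm (h : conn α β x y) : conn α β y x := Relation.EqvGen.symm _ _ h

lemma conn.trans (h₁ : conn α β x y) (h₂ : conn α β y z) : conn α β x z :=
  Relation.EqvGen.trans _ _ _ h₁ h₂

lemma conn_topMid {u v : V n} (h : α.r u v) : conn α β (topMid u) (topMid v) :=
  Relation.EqvGen.rel _ _ (Or.inl ⟨u, v, h, rfl, rfl⟩)

lemma conn_midBot {u v : V n} (h : β.r u v) : conn α β (midBot u) (midBot v) :=
  Relation.EqvGen.rel _ _ (Or.inr ⟨u, v, h, rfl, rfl⟩)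

lemma conn_induction {P : W n → Prop} (hα : ∀ u v, α.r u v → P (topMid u) → P (topMid v))
    (hβ : ∀ u v, β.r u v → P (midBot u) → P (midBot v)) (h : conn α β x y) : P x → P y := by
  refine eqvGen_invariant (graphRel_symm α β) ?_ h
  rintro _ _ (⟨u, v, huv, rfl, rfl⟩ | ⟨u, v, huv, rfl, rfl⟩)
  exacts [hα u v huv, hβ u v huv]

lemma conn_le {S : Setoid (W n)} (hα : ∀ u v, α.r u v → S (topMid u) (topMid v))
    (hβ : ∀ u v, β.r u v → S (midBot u) (midBot v)) (h : conn α β x y) : S x y :=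
  conn_induction (P := S x) (fun u v huv hu => S.trans hu (hα u v huv))
    (fun u v huv hu => S.trans hu (hβ u v huv)) h (S.refl x)

lemma conn_mono {α' β' : PM n} (hα : α ≤ α') (hβ : β ≤ β') (h : conn α β x y) :
    conn α' β' x y :=
  conn_le (S := connSetoid α' β') (fun _ _ huv => conn_topMid (hα huv))
    (fun _ _ huv => conn_midBot (hβ huv)) h

lemma pmul_rel {u v : V n} : pmul α β u v ↔ conn α β (topBot u) (topBot v) := Iff.rfl

lemma not_isMid_topBot (u : V n) : ¬ isMid (topBot u) := by
  rintro ⟨i, hi⟩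
  cases u <;> simp [topBot] at hi

lemma Phi_eq_card : Phi α β = Nat.card {c // ClassIn (connSetoid α β) isMid c} := rfl

lemma Phi_eq_zero (h : ∀ i, ∃ y, ¬ isMid y ∧ conn α β (Sum.inr (Sum.inl i)) y) : Phi α β = 0 := by
  refine Nat.card_eq_zero.2 (Or.inl ⟨fun ⟨c, hc⟩ => ?_⟩)
  obtain ⟨x, rfl⟩ := Quotient.exists_rep c
  obtain ⟨i, rfl⟩ := hc _ rfl
  obtain ⟨y, hy, hxy⟩ := h i
  exact hy (classIn_mk_iff.1 hc y hxy)

end ProductGraph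

def idx : V n → Fin n
  | Sum.inl i => i
  | Sum.inr i => i

def pone : PM n := Setoid.ker idx

/-- Contracts the identity edges between the middle and bottom rows of `Γ(α, 1)`. -/
def squashMidBot : W n → V n
  | Sum.inl i => Sum.inl i
  | Sum.inr (Sum.inl i) => Sum.inr i
  | Sum.inr (Sum.inr i) => Sum.inr i

lemma conn_pone_midBot (α : PM n) (i : Fin n) :
    conn α pone (midBot (Sum.inl i)) (midBot (Sum.inr i)) :=
  conn_midBot (show idx (Sum.inl i) = idx (Sum.inr i) from rfl)

lemma pmul_pone (α : PM n) : pmul α pone = α := by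
  ext x y
  constructor
  · intro h
    have := conn_le (β := pone) (S := α.comap squashMidBot)
      (fun u v huv => by cases u <;> cases v <;> exact huv)
      (fun u v huv => by
        change idx u = idx v at huv
        cases u <;> cases v <;> simp only [idx] at huv <;> subst huv <;> exact α.refl _) h
    cases x <;> cases y <;> exact this
  · intro h
    have hx : ∀ u : V n, conn α pone (topBot u) (topMid u) := by
      rintro (i | i)
      exacts [conn.refl _ _ _, (conn_pone_midBot α i).symm]
    exact (hx x).trans ((conn_topMid h).trans (hx y).symm)

lemma Phi_pone_right (α : PM n) : Phi α pone = 0 :=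
  Phi_eq_zero fun i => ⟨Sum.inr (Sum.inr i), not_isMid_topBot (Sum.inr i), conn_pone_midBot α i⟩

lemma classIn_congr {X Y : Type*} {S : Setoid X} {T : Setoid Y} (e : X ≃ Y)
    (hS : ∀ x x', S x x' ↔ T (e x) (e x')) {P : X → Prop} {Q : Y → Prop}
    (hPQ : ∀ x, P x ↔ Q (e x)) (c : Quotient S) :
    ClassIn S P c ↔ ClassIn T Q (Quotient.congr e hS c) := by
  induction c using Quotient.inductionOn with
  | h x =>
    rw [Quotient.congr_mk, classIn_mk_iff, classIn_mk_iff, ← e.forall_congr_right]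
    simp only [← hS, ← hPQ]

section Involution

variable {α β : PM n} {x y : W n}

def pstar (α : PM n) : PM n := α.comap Sum.swap

lemma pstar_rel {u v : V n} : pstar α u v ↔ α (Sum.swap u) (Sum.swap v) := Iff.rfl

lemma pstar_rel_swap {u v : V n} : pstar α (Sum.swap u) (Sum.swap v) ↔ α u v := by
  rw [pstar_rel, Sum.swap_swap, Sum.swap_swap]

lemma pstar_pstar (α : PM n) : pstar (pstar α) = α := by
  ext u v
  rw [pstar_rel, pstar_rel, Sum.swap_swap, Sum.swap_swap]

lemma pstar_pone : pstar (pone : PM n) = pone := by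
  ext u v
  cases u <;> cases v <;> rfl

def flipW : W n → W n
  | Sum.inl i => Sum.inr (Sum.inr i)
  | Sum.inr (Sum.inl i) => Sum.inr (Sum.inl i)
  | Sum.inr (Sum.inr i) => Sum.inl i

lemma flipW_flipW (x : W n) : flipW (flipW x) = x := by
  rcases x with i | i | i <;> rfl

lemma flipW_topMid (u : V n) : flipW (topMid u) = midBot (Sum.swap u) := by cases u <;> rfl

lemma flipW_midBot (u : V n) : flipW (midBot u) = topMid (Sum.swap u) := by cases u <;> rfl

lemma flipW_topBot (u : V n) : flipW (topBot u) = topBot (Sum.swap u) := by cases u <;> rfl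

lemma isMid_flipW_iff : isMid (flipW x) ↔ isMid x := by
  rcases x with i | i | i <;> simp [flipW, isMid]

lemma conn_flipW (h : conn α β x y) : conn (pstar β) (pstar α) (flipW x) (flipW y) := by
  refine conn_le (S := (connSetoid (pstar β) (pstar α)).comap flipW) (fun u v huv => ?_)
    (fun u v huv => ?_) h
  · rw [Setoid.comap_rel, flipW_topMid, flipW_topMid]
    exact conn_midBot (pstar_rel_swap.2 huv)
  · rw [Setoid.comap_rel, flipW_midBot, flipW_midBot]
    exact conn_topMid (pstar_rel_swap.2 huv)

lemma conn_flipW_iff : conn (pstar β) (pstar α) (flipW x) (flipW y) ↔ conn α β x y := by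
  refine ⟨fun h => ?_, conn_flipW⟩
  simpa only [pstar_pstar, flipW_flipW] using conn_flipW h

lemma pstar_pmul (α β : PM n) : pstar (pmul α β) = pmul (pstar β) (pstar α) := by
  ext u v
  rw [pstar_rel, pmul_rel, pmul_rel, ← conn_flipW_iff, flipW_topBot, flipW_topBot,
    Sum.swap_swap, Sum.swap_swap]

lemma Phi_pstar (α β : PM n) : Phi (pstar β) (pstar α) = Phi α β :=
  (Nat.card_congr (Equiv.subtypeEquiv _
    (classIn_congr (Function.Involutive.toPerm flipW flipW_flipW)
      (fun _ _ => conn_flipW_iff.symm) (fun _ => isMid_flipW_iff.symm)))).symm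

lemma pone_pmul (α : PM n) : pmul pone α = α := by
  rw [← pstar_pstar (pmul pone α), pstar_pmul, pstar_pone, pmul_pone, pstar_pstar]

lemma Phi_pone_left (α : PM n) : Phi pone α = 0 := by
  rw [← Phi_pstar, pstar_pone, Phi_pone_right]

end Involution

abbrev W4 (n : ℕ) := Fin 4 × Fin n

def rows (k : Fin 4) : V n → W4 n
  | Sum.inl i => (k, i)
  | Sum.inr i => (k + 1, i)

def rows03 : V n → W4 n
  | Sum.inl i => (0, i)
  | Sum.inr i => (3, i)

def emb012 : W n → W4 n
  | Sum.inl i => (0, i)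
  | Sum.inr (Sum.inl i) => (1, i)
  | Sum.inr (Sum.inr i) => (2, i)

def emb023 : W n → W4 n
  | Sum.inl i => (0, i)
  | Sum.inr (Sum.inl i) => (2, i)
  | Sum.inr (Sum.inr i) => (3, i)

/-- The product graph `Γ(α, β, γ)` of three partitions on four rows. -/
def graphRel4 (α β γ : PM n) (x y : W4 n) : Prop :=
  (∃ u v, α.r u v ∧ x = rows 0 u ∧ y = rows 0 v) ∨
  (∃ u v, β.r u v ∧ x = rows 1 u ∧ y = rows 1 v) ∨
  (∃ u v, γ.r u v ∧ x = rows 2 u ∧ y = rows 2 v)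

def conn4 (α β γ : PM n) : W4 n → W4 n → Prop := Relation.EqvGen (graphRel4 α β γ)

def conn4Setoid (α β γ : PM n) : Setoid (W4 n) :=
  ⟨conn4 α β γ, Relation.EqvGen.is_equivalence _⟩

lemma emb012_topMid (u : V n) : emb012 (topMid u) = rows 0 u := by cases u <;> rfl

lemma emb012_midBot (u : V n) : emb012 (midBot u) = rows 1 u := by cases u <;> rfl

lemma emb012_topBot (u : V n) : emb012 (topBot u) = emb023 (topMid u) := by cases u <;> rfl

lemma emb023_midBot (u : V n) : emb023 (midBot u) = rows 2 u := by cases u <;> rfl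

lemma emb023_topBot (u : V n) : emb023 (topBot u) = rows03 u := by cases u <;> rfl

lemma emb012_injective : Function.Injective (emb012 (n := n)) := by
  rintro (i | i | i) (j | j | j) h <;> simp_all [emb012]

lemma emb023_injective : Function.Injective (emb023 (n := n)) := by
  rintro (i | i | i) (j | j | j) h <;> simp_all [emb023]

lemma emb012_eq_emb023_iff {w y : W n} :
    emb012 w = emb023 y ↔ ∃ u, w = topBot u ∧ y = topMid u := by
  constructor
  · intro h
    rcases w with i | i | i <;> rcases y with j | j | j <;> simp [emb012, emb023] at h <;>
      subst h
    exacts [⟨Sum.inl i, rfl, rfl⟩, ⟨Sum.inr i, rfl, rfl⟩]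
  · rintro ⟨u, rfl, rfl⟩
    exact emb012_topBot u

lemma emb012_fst_eq_one_iff {x : W n} : (emb012 x).1 = 1 ↔ isMid x := by
  rcases x with i | i | i <;> simp [emb012, isMid]

lemma emb023_fst_mem_iff {x : W n} : (emb023 x).1 = 1 ∨ (emb023 x).1 = 2 ↔ isMid x := by
  rcases x with i | i | i <;> simp [emb023, isMid]

lemma not_isMid_of_emb012_eq_rows2 {x : W n} {u : V n} (h : emb012 x = rows 2 u) :
    ¬ isMid x := by
  rcases x with i | i | i <;> cases u <;> simp_all [emb012, rows, isMid]

section FourRowGraph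

variable {α β γ : PM n} {z z' z'' : W4 n}

lemma graphRel4_symm (α β γ : PM n) (x y : W4 n) :
    graphRel4 α β γ x y → graphRel4 α β γ y x := by
  rintro (⟨u, v, h, rfl, rfl⟩ | ⟨u, v, h, rfl, rfl⟩ | ⟨u, v, h, rfl, rfl⟩)
  exacts [Or.inl ⟨v, u, α.symm h, rfl, rfl⟩, Or.inr (Or.inl ⟨v, u, β.symm h, rfl, rfl⟩),
    Or.inr (Or.inr ⟨v, u, γ.symm h, rfl, rfl⟩)]

lemma conn4.symm (h : conn4 α β γ z z') : conn4 α β γ z' z := Relation.EqvGen.symm _ _ h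

lemma conn4.trans (h₁ : conn4 α β γ z z') (h₂ : conn4 α β γ z' z'') : conn4 α β γ z z'' :=
  Relation.EqvGen.trans _ _ _ h₁ h₂

lemma conn4_rows0 {u v : V n} (h : α.r u v) : conn4 α β γ (rows 0 u) (rows 0 v) :=
  Relation.EqvGen.rel _ _ (Or.inl ⟨u, v, h, rfl, rfl⟩)

lemma conn4_rows1 {u v : V n} (h : β.r u v) : conn4 α β γ (rows 1 u) (rows 1 v) :=
  Relation.EqvGen.rel _ _ (Or.inr (Or.inl ⟨u, v, h, rfl, rfl⟩))

lemma conn4_rows2 {u v : V n} (h : γ.r u v) : conn4 α β γ (rows 2 u) (rows 2 v) :=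
  Relation.EqvGen.rel _ _ (Or.inr (Or.inr ⟨u, v, h, rfl, rfl⟩))

lemma conn4_induction {P : W4 n → Prop} (hα : ∀ u v, α.r u v → P (rows 0 u) → P (rows 0 v))
    (hβ : ∀ u v, β.r u v → P (rows 1 u) → P (rows 1 v))
    (hγ : ∀ u v, γ.r u v → P (rows 2 u) → P (rows 2 v)) (h : conn4 α β γ z z') :
    P z → P z' := by
  refine eqvGen_invariant (graphRel4_symm α β γ) ?_ h
  rintro _ _ (⟨u, v, huv, rfl, rfl⟩ | ⟨u, v, huv, rfl, rfl⟩ | ⟨u, v, huv, rfl, rfl⟩)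
  exacts [hα u v huv, hβ u v huv, hγ u v huv]

lemma conn4_le {S : Setoid (W4 n)} (hα : ∀ u v, α.r u v → S (rows 0 u) (rows 0 v))
    (hβ : ∀ u v, β.r u v → S (rows 1 u) (rows 1 v))
    (hγ : ∀ u v, γ.r u v → S (rows 2 u) (rows 2 v)) (h : conn4 α β γ z z') : S z z' :=
  conn4_induction (P := S z) (fun u v huv hu => S.trans hu (hα u v huv))
    (fun u v huv hu => S.trans hu (hβ u v huv)) (fun u v huv hu => S.trans hu (hγ u v huv))
    h (S.refl z)

lemma conn4_emb012 {x y : W n} (h : conn α β x y) : conn4 α β γ (emb012 x) (emb012 y) :=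
  conn_le (S := (conn4Setoid α β γ).comap emb012)
    (fun u v huv => by
      rw [Setoid.comap_rel, emb012_topMid, emb012_topMid]; exact conn4_rows0 huv)
    (fun u v huv => by
      rw [Setoid.comap_rel, emb012_midBot, emb012_midBot]; exact conn4_rows1 huv) h

lemma conn4_emb023 {x y : W n} (h : conn (pmul α β) γ x y) :
    conn4 α β γ (emb023 x) (emb023 y) :=
  conn_le (S := (conn4Setoid α β γ).comap emb023)
    (fun u v huv => by
      rw [Setoid.comap_rel, ← emb012_topBot, ← emb012_topBot]; exact conn4_emb012 huv)
    (fun u v huv => by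
      rw [Setoid.comap_rel, emb023_midBot, emb023_midBot]; exact conn4_rows2 huv) h

/-- The vertices of `Γ(α, β, γ)` joined to `emb023 x`, described through `Γ(αβ, γ)` and
`Γ(α, β)`. -/
def Reach023 (α β γ : PM n) (x : W n) (z : W4 n) : Prop :=
  (∃ y, z = emb023 y ∧ conn (pmul α β) γ x y) ∨
  ∃ u w, z = emb012 w ∧ conn (pmul α β) γ x (topMid u) ∧ conn α β (topBot u) w

lemma reach023_emb023_iff {x y : W n} : Reach023 α β γ x (emb023 y) ↔ conn (pmul α β) γ x y := by
  refine ⟨?_, fun h => Or.inl ⟨y, rfl, h⟩⟩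
  rintro (⟨y', hy, h⟩ | ⟨u, w, hw, hu, huw⟩)
  · rwa [emb023_injective hy]
  · obtain ⟨u', rfl, rfl⟩ := emb012_eq_emb023_iff.1 hw.symm
    exact hu.trans (conn_topMid huw)

lemma reach023_emb012_iff {x w : W n} : Reach023 α β γ x (emb012 w) ↔
    ∃ u, conn (pmul α β) γ x (topMid u) ∧ conn α β (topBot u) w := by
  refine ⟨?_, fun ⟨u, hu, huw⟩ => Or.inr ⟨u, w, rfl, hu, huw⟩⟩
  rintro (⟨y, hy, h⟩ | ⟨u, w', hw, hu, huw⟩)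
  · obtain ⟨u, rfl, rfl⟩ := emb012_eq_emb023_iff.1 hy
    exact ⟨u, h, conn.refl _ _ _⟩
  · rw [emb012_injective hw]
    exact ⟨u, hu, huw⟩

lemma conn_of_conn4_emb023 {x y : W n} (h : conn4 α β γ (emb023 x) (emb023 y)) :
    conn (pmul α β) γ x y := by
  refine reach023_emb023_iff.1 (conn4_induction (fun u v huv => ?_) (fun u v huv => ?_)
    (fun u v huv => ?_) h (reach023_emb023_iff.2 (conn.refl _ _ _)))
  · rw [← emb012_topMid, ← emb012_topMid, reach023_emb012_iff, reach023_emb012_iff]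
    exact fun ⟨w, hw, hwu⟩ => ⟨w, hw, hwu.trans (conn_topMid huv)⟩
  · rw [← emb012_midBot, ← emb012_midBot, reach023_emb012_iff, reach023_emb012_iff]
    exact fun ⟨w, hw, hwu⟩ => ⟨w, hw, hwu.trans (conn_midBot huv)⟩
  · rw [← emb023_midBot, ← emb023_midBot, reach023_emb023_iff, reach023_emb023_iff]
    exact fun hu => hu.trans (conn_midBot huv)

lemma conn4_emb023_iff {x y : W n} :
    conn4 α β γ (emb023 x) (emb023 y) ↔ conn (pmul α β) γ x y :=
  ⟨conn_of_conn4_emb023, conn4_emb023⟩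

/-- A floating component of `Γ(α, β)` avoids row `2`, the only row of `Γ(α, β, γ)` that `γ`
adds to. -/
lemma exists_conn_of_conn4_emb012 {x : W n} (hx : ClassIn (connSetoid α β) isMid ⟦x⟧)
    (h : conn4 α β γ (emb012 x) z) : ∃ y, z = emb012 y ∧ conn α β x y := by
  refine conn4_induction (P := fun z => ∃ y, z = emb012 y ∧ conn α β x y)
    (fun u v huv => ?_) (fun u v huv => ?_) (fun u v huv => ?_) h ⟨x, rfl, conn.refl _ _ _⟩
  · rintro ⟨y, hy, hxy⟩
    rw [← emb012_topMid, emb012_injective.eq_iff] at hy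
    subst hy
    exact ⟨topMid v, (emb012_topMid v).symm, hxy.trans (conn_topMid huv)⟩
  · rintro ⟨y, hy, hxy⟩
    rw [← emb012_midBot, emb012_injective.eq_iff] at hy
    subst hy
    exact ⟨midBot v, (emb012_midBot v).symm, hxy.trans (conn_midBot huv)⟩
  · rintro ⟨y, hy, hxy⟩
    exact absurd (classIn_mk_iff.1 hx y hxy) (not_isMid_of_emb012_eq_rows2 hy.symm)

lemma pmul_pmul_rel {u v : V n} : pmul (pmul α β) γ u v ↔ conn4 α β γ (rows03 u) (rows03 v) := by
  rw [pmul_rel, ← conn4_emb023_iff, emb023_topBot, emb023_topBot]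

def flip4 (z : W4 n) : W4 n := (z.1.rev, z.2)

lemma flip4_flip4 (z : W4 n) : flip4 (flip4 z) = z := by simp [flip4]

lemma flip4_rows0 (u : V n) : flip4 (rows 0 u) = rows 2 (Sum.swap u) := by cases u <;> rfl

lemma flip4_rows1 (u : V n) : flip4 (rows 1 u) = rows 1 (Sum.swap u) := by cases u <;> rfl

lemma flip4_rows2 (u : V n) : flip4 (rows 2 u) = rows 0 (Sum.swap u) := by cases u <;> rfl

lemma flip4_rows03 (u : V n) : flip4 (rows03 u) = rows03 (Sum.swap u) := by cases u <;> rfl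

lemma conn4_flip4 (h : conn4 α β γ z z') :
    conn4 (pstar γ) (pstar β) (pstar α) (flip4 z) (flip4 z') := by
  refine conn4_le (S := (conn4Setoid _ _ _).comap flip4) (fun u v huv => ?_)
    (fun u v huv => ?_) (fun u v huv => ?_) h
  · rw [Setoid.comap_rel, flip4_rows0, flip4_rows0]; exact conn4_rows2 (pstar_rel_swap.2 huv)
  · rw [Setoid.comap_rel, flip4_rows1, flip4_rows1]; exact conn4_rows1 (pstar_rel_swap.2 huv)
  · rw [Setoid.comap_rel, flip4_rows2, flip4_rows2]; exact conn4_rows0 (pstar_rel_swap.2 huv)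

lemma conn4_flip4_iff :
    conn4 (pstar γ) (pstar β) (pstar α) (flip4 z) (flip4 z') ↔ conn4 α β γ z z' := by
  refine ⟨fun h => ?_, conn4_flip4⟩
  simpa only [pstar_pstar, flip4_flip4] using conn4_flip4 h

lemma pmul_pmul_rel' {u v : V n} :
    pmul α (pmul β γ) u v ↔ conn4 α β γ (rows03 u) (rows03 v) := by
  have h : pmul α (pmul β γ) = pstar (pmul (pmul (pstar γ) (pstar β)) (pstar α)) := by
    rw [pstar_pmul, pstar_pmul, pstar_pstar, pstar_pstar, pstar_pstar]
  rw [h, pstar_rel, pmul_pmul_rel, ← flip4_rows03, ← flip4_rows03, conn4_flip4_iff]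

end FourRowGraph

lemma pmul_assoc (α β γ : PM n) : pmul (pmul α β) γ = pmul α (pmul β γ) := by
  ext u v
  rw [pmul_pmul_rel, pmul_pmul_rel']

lemma card_classIn_eq_of_map {X Y : Type*} {S : Setoid X} {T : Setoid Y} {P : X → Prop}
    {Q : Y → Prop} (f : X → Y) (hf : ∀ ⦃x x'⦄, S x x' → T (f x) (f x'))
    (hinj : ∀ x x', ClassIn S P ⟦x⟧ → T (f x) (f x') → S x x')
    (hPQ : ∀ x, ClassIn S P ⟦x⟧ ↔ ClassIn T Q ⟦f x⟧) :
    Nat.card {c // ClassIn S P c} = Nat.card {d // ClassIn T Q d ∧ ∃ x, ⟦f x⟧ = d} := by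
  refine Nat.card_eq_of_bijective (fun c => ⟨Quotient.map f hf c.1, ?_⟩) ⟨?_, ?_⟩
  · obtain ⟨c, hc⟩ := c
    induction c using Quotient.inductionOn with
    | h x => exact ⟨(hPQ x).1 hc, x, rfl⟩
  · rintro ⟨c₁, h₁⟩ ⟨c₂, h₂⟩ h
    induction c₁ using Quotient.inductionOn
    induction c₂ using Quotient.inductionOn
    exact Subtype.ext (Quotient.sound (hinj _ _ h₁ (Quotient.exact (congrArg Subtype.val h))))
  · rintro ⟨_, hd, x, rfl⟩
    exact ⟨⟨⟦x⟧, (hPQ x).2 hd⟩, rfl⟩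

lemma card_subtype_eq_add {X : Type*} [Finite X] {p q : X → Prop} (hqp : ∀ x, q x → p x) :
    Nat.card {x // p x} = Nat.card {x // q x} + Nat.card {x // p x ∧ ¬ q x} := by
  have hsub : {x | q x} ⊆ {x | p x} := hqp
  have h := Set.ncard_inter_add_ncard_sdiff_eq_ncard {x | p x} {x | q x}
  rw [Set.inter_eq_right.2 hsub] at h
  exact h.symm

lemma emb012_mid {z : W4 n} (h : z.1 = 1) : emb012 (Sum.inr (Sum.inl z.2)) = z :=
  Prod.ext h.symm rfl

lemma emb023_mid {z : W4 n} (h : z.1 = 2) : emb023 (Sum.inr (Sum.inl z.2)) = z :=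
  Prod.ext h.symm rfl

lemma emb023_fst_ne_one (x : W n) : (emb023 x).1 ≠ 1 := by
  rcases x with i | i | i <;> simp [emb023]

lemma exists_emb023_eq {z : W4 n} (h : ¬ (z.1 = 1 ∨ z.1 = 2)) : ∃ y, emb023 y = z := by
  obtain ⟨k, i⟩ := z
  fin_cases k <;> simp at h
  exacts [⟨Sum.inl i, rfl⟩, ⟨Sum.inr (Sum.inr i), rfl⟩]

section Cocycle

variable (α β γ : PM n)

/-- Row `1` of `Γ(α, β, γ)` carries the middle row of `Γ(α, β)`. -/
lemma Phi_eq_card_row1 :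
    Phi α β = Nat.card {d // ClassIn (conn4Setoid α β γ) (·.1 = 1) d} := by
  rw [Phi_eq_card, card_classIn_eq_of_map (T := conn4Setoid α β γ) emb012 (fun _ _ => conn4_emb012)]
  · refine Nat.card_congr (Equiv.subtypeEquivRight fun d => and_iff_left_of_imp fun hd => ?_)
    obtain ⟨z, rfl⟩ := Quotient.exists_rep d
    exact ⟨_, congrArg _ (emb012_mid (hd z rfl))⟩
  · intro x x' hx h
    obtain ⟨y, hy, hxy⟩ := exists_conn_of_conn4_emb012 hx h
    rwa [emb012_injective hy]
  · intro x
    rw [classIn_mk_iff, classIn_mk_iff]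
    constructor
    · intro hx z hz
      obtain ⟨y, rfl, hxy⟩ := exists_conn_of_conn4_emb012 (classIn_mk_iff.2 hx) hz
      exact emb012_fst_eq_one_iff.2 (hx y hxy)
    · exact fun hx y hxy => emb012_fst_eq_one_iff.1 (hx _ (conn4_emb012 hxy))

/-- Rows `1` and `2` of `Γ(α, β, γ)` carry the middle row of `Γ(αβ, γ)`. -/
lemma Phi_pmul_eq_card_rows12 :
    Phi (pmul α β) γ = Nat.card {d // ClassIn (conn4Setoid α β γ) (fun z => z.1 = 1 ∨ z.1 = 2) d ∧
      ¬ ClassIn (conn4Setoid α β γ) (·.1 = 1) d} := by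
  rw [Phi_eq_card, card_classIn_eq_of_map (T := conn4Setoid α β γ) emb023 (fun _ _ => conn4_emb023)
    (fun _ _ _ h => conn_of_conn4_emb023 h)]
  · refine Nat.card_congr (Equiv.subtypeEquivRight fun d => and_congr_right fun hd => ?_)
    obtain ⟨z, rfl⟩ := Quotient.exists_rep d
    constructor
    · rintro ⟨x, hx⟩ h
      exact emb023_fst_ne_one x (h _ hx)
    · intro h
      obtain ⟨z', hz', h1⟩ : ∃ z', ⟦z'⟧ = ⟦z⟧ ∧ ¬ z'.1 = 1 := by
        simpa [ClassIn] using h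
      exact ⟨_, (congrArg _ (emb023_mid ((hd z' hz').resolve_left h1))).trans hz'⟩
  · intro x
    rw [classIn_mk_iff, classIn_mk_iff]
    constructor
    · intro hx z hz
      by_contra h
      obtain ⟨y, rfl⟩ := exists_emb023_eq h
      exact h (emb023_fst_mem_iff.2 (hx y (conn_of_conn4_emb023 hz)))
    · exact fun hx y hxy => emb023_fst_mem_iff.1 (hx _ (conn4_emb023 hxy))

lemma conn4_pstar_iff {z z' : W4 n} :
    conn4 (pstar γ) (pstar β) (pstar α) z z' ↔ conn4 α β γ (flip4 z) (flip4 z') := by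
  simpa only [pstar_pstar] using
    (conn4_flip4_iff (α := pstar γ) (β := pstar β) (γ := pstar α) (z := z) (z' := z')).symm

lemma classIn_flip4_iff {P Q : W4 n → Prop} (hPQ : ∀ z, P z ↔ Q (flip4 z))
    (d : Quotient (conn4Setoid (pstar γ) (pstar β) (pstar α))) :
    ClassIn _ P d ↔ ClassIn (conn4Setoid α β γ) Q
      (Quotient.congr (Function.Involutive.toPerm flip4 flip4_flip4)
        (fun _ _ => conn4_pstar_iff α β γ) d) :=
  classIn_congr _ _ hPQ d

lemma Phi_cocycle : Phi α β + Phi (pmul α β) γ = Phi β γ + Phi α (pmul β γ) := by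
  have flip_row1 : ∀ z : W4 n, z.1 = 1 ↔ (flip4 z).1 = 2 := by
    rintro ⟨k, i⟩; fin_cases k <;> simp [flip4]
  have flip_rows12 : ∀ z : W4 n, (z.1 = 1 ∨ z.1 = 2) ↔ ((flip4 z).1 = 1 ∨ (flip4 z).1 = 2) := by
    rintro ⟨k, i⟩; fin_cases k <;> simp [flip4]
  have hB : Phi β γ = Nat.card {d // ClassIn (conn4Setoid α β γ) (·.1 = 2) d} := by
    rw [← Phi_pstar, Phi_eq_card_row1 _ _ (pstar α)]
    exact Nat.card_congr (Equiv.subtypeEquiv _ (classIn_flip4_iff α β γ flip_row1))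
  have hBC : Phi α (pmul β γ) = Nat.card {d //
      ClassIn (conn4Setoid α β γ) (fun z => z.1 = 1 ∨ z.1 = 2) d ∧
      ¬ ClassIn (conn4Setoid α β γ) (·.1 = 2) d} := by
    rw [← Phi_pstar, pstar_pmul, Phi_pmul_eq_card_rows12]
    exact Nat.card_congr (Equiv.subtypeEquiv _ fun d =>
      and_congr (classIn_flip4_iff α β γ flip_rows12 d)
        (not_congr (classIn_flip4_iff α β γ flip_row1 d)))
  have split : ∀ k : Fin 4, k = 1 ∨ k = 2 → _ := fun k hk =>
    card_subtype_eq_add (p := ClassIn (conn4Setoid α β γ) fun z => z.1 = 1 ∨ z.1 = 2)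
      (q := ClassIn (conn4Setoid α β γ) (·.1 = k)) fun d hd z hz => by
        rcases hk with rfl | rfl
        exacts [Or.inl (hd z hz), Or.inr (hd z hz)]
  rw [Phi_eq_card_row1 α β γ, Phi_pmul_eq_card_rows12, hB, hBC, ← split 1 (Or.inl rfl),
    ← split 2 (Or.inr rfl)]

end Cocycle

lemma tmul_assoc (a b c : ℕ × PM n) : tmul (tmul a b) c = tmul a (tmul b c) := by
  have := Phi_cocycle a.2 b.2 c.2
  refine Prod.ext ?_ (pmul_assoc _ _ _)
  simp only [tmul]
  omega

lemma tmul_one (a : ℕ × PM n) : tmul a (0, pone) = a :=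
  Prod.ext (by simp [tmul, Phi_pone_right]) (pmul_pone _)

lemma one_tmul (a : ℕ × PM n) : tmul (0, pone) a = a :=
  Prod.ext (by simp [tmul, Phi_pone_left]) (pone_pmul _)

def IsTransversal (α : PM n) (c : Quotient α) : Prop :=
  (∃ i, Quotient.mk α (Sum.inl i) = c) ∧ ∃ i, Quotient.mk α (Sum.inr i) = c

section Rank

variable {α β : PM n}

lemma isTransversal_mk_of_rel {k m : Fin n} (h : α.r (Sum.inl k) (Sum.inr m)) :
    IsTransversal α ⟦Sum.inl k⟧ :=
  ⟨⟨k, rfl⟩, m, Quotient.sound (α.symm h)⟩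

lemma rnk_pstar (α : PM n) : rnk (pstar α) = rnk α := by
  let e : Quotient (pstar α) ≃ Quotient α :=
    Quotient.congr (Equiv.sumComm (Fin n) (Fin n)) fun _ _ => Iff.rfl
  have he : ∀ u, e ⟦u⟧ = ⟦Sum.swap u⟧ := fun _ => rfl
  refine Nat.card_congr (Equiv.subtypeEquiv e fun c => ?_)
  have h : ∀ u, ⟦Sum.swap u⟧ = e c ↔ ⟦u⟧ = c := fun u => by rw [← he, e.apply_eq_iff_eq]
  exact ⟨fun ⟨⟨i, hi⟩, ⟨j, hj⟩⟩ => ⟨⟨j, (h (Sum.inr j)).2 hj⟩, ⟨i, (h (Sum.inl i)).2 hi⟩⟩,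
    fun ⟨⟨i, hi⟩, ⟨j, hj⟩⟩ => ⟨⟨j, (h (Sum.inl j)).1 hj⟩, ⟨i, (h (Sum.inr i)).1 hi⟩⟩⟩

/-- Leaving the top row of `Γ(α, β)` requires crossing a transversal of `α`. -/
lemma exists_transversal_of_conn {i j : Fin n}
    (h : conn α β (Sum.inl i) (Sum.inr (Sum.inr j))) :
    ∃ k, IsTransversal α ⟦Sum.inl k⟧ ∧ conn α β (Sum.inl i) (Sum.inl k) := by
  set Q := ∃ k, IsTransversal α ⟦Sum.inl k⟧ ∧ conn α β (Sum.inl i) (Sum.inl k)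
  refine (conn_induction
    (P := fun z => (∃ k, z = Sum.inl k ∧ conn α β (Sum.inl i) z) ∨ Q)
    (fun u v huv => ?_) (fun u v _ => ?_) h (Or.inl ⟨i, rfl, conn.refl _ _ _⟩)).resolve_left
    (by simp)
  · rintro (⟨k, hk, hik⟩ | hQ)
    · cases u with
      | inr => simp [topMid] at hk
      | inl k' =>
        obtain rfl : k' = k := by simpa [topMid] using hk
        cases v with
        | inl l => exact Or.inl ⟨l, rfl, hik.trans (conn_topMid huv)⟩
        | inr m => exact Or.inr ⟨k', isTransversal_mk_of_rel huv, hik⟩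
    · exact Or.inr hQ
  · rintro (⟨k, hk, -⟩ | hQ)
    · cases u <;> simp [midBot] at hk
    · exact Or.inr hQ

lemma rnk_pmul_le_left (α β : PM n) : rnk (pmul α β) ≤ rnk α := by
  have key : ∀ c : {c // IsTransversal (pmul α β) c}, ∃ k, IsTransversal α ⟦Sum.inl k⟧ ∧
      ∃ i, ⟦Sum.inl i⟧ = c.1 ∧ conn α β (Sum.inl i) (Sum.inl k) := by
    rintro ⟨c, ⟨i, hi⟩, ⟨j, hj⟩⟩
    obtain ⟨k, hk, hik⟩ := exists_transversal_of_conn (Quotient.exact (hi.trans hj.symm))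
    exact ⟨k, hk, i, hi, hik⟩
  choose k hk i hi hik using key
  refine Nat.card_le_card_of_injective (fun c => ⟨⟦Sum.inl (k c)⟧, hk c⟩) fun c₁ c₂ h => ?_
  have hk₁₂ : conn α β (Sum.inl (k c₁)) (Sum.inl (k c₂)) :=
    conn_topMid (Quotient.exact (congrArg Subtype.val h))
  refine Subtype.ext ((hi c₁).symm.trans ((Quotient.sound ?_).trans (hi c₂)))
  exact (hik c₁).trans (hk₁₂.trans (hik c₂).symm)

lemma rnk_pmul_le_right (α β : PM n) : rnk (pmul α β) ≤ rnk β := by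
  simpa only [← pstar_pmul, rnk_pstar] using rnk_pmul_le_left (pstar β) (pstar α)

lemma rnk_ker {Y : Type*} (f : V n → Y) :
    rnk (Setoid.ker f) = Nat.card {y // (∃ i, f (Sum.inl i) = y) ∧ ∃ i, f (Sum.inr i) = y} := by
  refine Nat.card_eq_of_bijective (fun c => ⟨Setoid.kerLift f c.1, ?_⟩) ⟨?_, ?_⟩
  · obtain ⟨c, ⟨i, rfl⟩, ⟨j, hj⟩⟩ := c
    exact ⟨⟨i, rfl⟩, j, Quotient.exact hj⟩
  · exact fun c₁ c₂ h => Subtype.ext (Setoid.kerLift_injective f (congrArg Subtype.val h))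
  · rintro ⟨y, ⟨i, rfl⟩, ⟨j, hj⟩⟩
    exact ⟨⟨⟦Sum.inl i⟧, ⟨i, rfl⟩, j, Quotient.sound hj⟩, rfl⟩

/-- The partition whose transversals are `{i, i'}` for `i < q`, the remaining lower points
forming one block. -/
lemma exists_rnk_eq {q : ℕ} (hq : q ≤ n) : ∃ α : PM n, rnk α = q := by
  let f : V n → ℕ
    | Sum.inl i => i
    | Sum.inr i => if (i : ℕ) < q then i else n
  refine ⟨Setoid.ker f, ?_⟩
  have key : ∀ y, ((∃ i, f (Sum.inl i) = y) ∧ ∃ i, f (Sum.inr i) = y) ↔ y < q := by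
    intro y
    constructor
    · rintro ⟨⟨i, rfl⟩, j, hj⟩
      show (i : ℕ) < q
      by_cases hjq : (j : ℕ) < q
      · simp only [f, hjq, if_true] at hj
        rwa [← hj]
      · simp only [f, hjq, if_false] at hj
        exact absurd hj (ne_of_gt i.2)
    · intro hy
      exact ⟨⟨⟨y, hy.trans_le hq⟩, rfl⟩, ⟨y, hy.trans_le hq⟩, by simp [f, hy]⟩
  rw [rnk_ker, Nat.card_congr (Equiv.subtypeEquivRight key), ← Nat.card_congr Fin.equivSubtype,
    Nat.card_eq_fintype_card, Fintype.card_fin]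

end Rank

lemma pmul_pmul_ker_eq {Y : Type*} (K : W4 n → Y) (α : PM n)
    (hα : ∀ u v, α.r u v → K (rows 1 u) = K (rows 1 v))
    (hpath : ∀ i i', K (rows03 (Sum.inl i)) = K (rows03 (Sum.inr i')) →
      ∃ j j', α.r (Sum.inl j) (Sum.inr j') ∧ K (rows 0 (Sum.inl i)) = K (rows 0 (Sum.inr j)) ∧
        K (rows 2 (Sum.inl j')) = K (rows 2 (Sum.inr i'))) :
    pmul (pmul (Setoid.ker (K ∘ rows 0)) α) (Setoid.ker (K ∘ rows 2)) =
      Setoid.ker (K ∘ rows03) := by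
  have top_bot : ∀ i i', K (rows03 (Sum.inl i)) = K (rows03 (Sum.inr i')) →
      conn4 (Setoid.ker (K ∘ rows 0)) α (Setoid.ker (K ∘ rows 2))
        (rows03 (Sum.inl i)) (rows03 (Sum.inr i')) := by
    intro i i' h
    obtain ⟨j, j', hjj', h₀, h₂⟩ := hpath i i' h
    exact (conn4_rows0 (u := Sum.inl i) h₀).trans ((conn4_rows1 (u := Sum.inl j) hjj').trans
      (conn4_rows2 (γ := Setoid.ker (K ∘ rows 2)) (u := Sum.inl j') (v := Sum.inr i') h₂))
  ext u v
  rw [pmul_pmul_rel]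
  refine ⟨fun h => conn4_le (α := Setoid.ker (K ∘ rows 0)) (γ := Setoid.ker (K ∘ rows 2))
    (S := Setoid.ker K) (fun _ _ h => h) hα (fun _ _ h => h) h, fun h => ?_⟩
  rcases u with i | i <;> rcases v with i' | i'
  exacts [conn4_rows0 (u := Sum.inl i) (v := Sum.inl i') h, top_bot i i' h,
    (top_bot i' i h.symm).symm, conn4_rows2 (u := Sum.inr i) (v := Sum.inr i') h]

/-- Route the `s`-th transversal of `β` through the `s`-th transversal of `α`. -/
lemma exists_pmul_pmul_eq {α β : PM n} (h : rnk β ≤ rnk α) : ∃ γ δ, pmul (pmul γ α) δ = β := by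
  classical
  let tα : Fin (rnk α) ≃ {c // IsTransversal α c} := (Finite.equivFin _).symm
  let e : Fin (rnk β) ≃ {c // IsTransversal β c} := (Finite.equivFin _).symm
  let d : Fin (rnk β) → {c // IsTransversal α c} := fun s => tα (Fin.castLE h s)
  have hd : Function.Injective fun s => (d s).1 :=
    fun s t hst => Fin.castLE_injective h (tα.injective (Subtype.ext hst))
  let L : Quotient α → Quotient β ⊕ Quotient α := fun c =>
    if hc : ∃ s, (d s).1 = c then Sum.inl (e hc.choose).1 else Sum.inr c
  have hL : ∀ s, L (d s).1 = Sum.inl (e s).1 := fun s => by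
    have hs : ∃ t, (d t).1 = (d s).1 := ⟨s, rfl⟩
    simp only [L, dif_pos hs, hd hs.choose_spec]
  let K : W4 n → Quotient β ⊕ Quotient α
    | (0, i) => Sum.inl ⟦Sum.inl i⟧
    | (1, j) => L ⟦Sum.inl j⟧
    | (2, j) => L ⟦Sum.inr j⟧
    | (3, i) => Sum.inl ⟦Sum.inr i⟧
  have hK₁ : ∀ u, K (rows 1 u) = L ⟦u⟧ := by rintro (j | j) <;> rfl
  have hK₀₃ : ∀ u, K (rows03 u) = Sum.inl ⟦u⟧ := by rintro (i | i) <;> rfl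
  refine ⟨_, _, (pmul_pmul_ker_eq K α (fun u v huv => ?_) (fun i i' hii' => ?_)).trans ?_⟩
  · rw [hK₁, hK₁, Quotient.sound huv]
  · rw [hK₀₃, hK₀₃, Sum.inl.injEq] at hii'
    obtain ⟨s, hs⟩ := e.surjective ⟨⟦Sum.inl i⟧, ⟨i, rfl⟩, i', hii'.symm⟩
    replace hs : (e s).1 = ⟦Sum.inl i⟧ := congrArg Subtype.val hs
    obtain ⟨⟨j, hj⟩, j', hj'⟩ := (d s).2
    refine ⟨j, j', Quotient.exact (hj.trans hj'.symm), ?_, ?_⟩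
    · change Sum.inl _ = L _
      rw [hj, hL, hs]
    · change L _ = Sum.inl _
      rw [hj', hL, hs, hii']
  · ext u v
    exact (congrArg₂ Eq (hK₀₃ u) (hK₀₃ v)).to_iff.trans (Sum.inl_injective.eq_iff.trans Quotient.eq)

/-- Merging the floating components of `Γ(α, δ₀)` into the block of a lower vertex does not change
the product but leaves no floating component. -/
lemma exists_pmul_eq_and_Phi_eq_zero (α δ₀ : PM n) : ∃ δ, pmul α δ = pmul α δ₀ ∧ Phi α δ = 0 := by
  classical
  rcases isEmpty_or_nonempty (Fin n) with hn | ⟨⟨z₀⟩⟩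
  · exact ⟨δ₀, rfl, Phi_eq_zero fun i => isEmptyElim i⟩
  let S := connSetoid α δ₀
  let C : W n → Quotient S := fun x =>
    if ClassIn S isMid ⟦x⟧ then ⟦Sum.inr (Sum.inr z₀)⟧ else ⟦x⟧
  have hC : ∀ x y, conn α δ₀ x y → C x = C y := fun x y h => by
    simp only [C, Quotient.sound (s := S) h]
  have hC_topBot : ∀ u, C (topBot u) = ⟦topBot u⟧ :=
    fun u => if_neg fun h => not_isMid_topBot u (h _ rfl)
  have hle : δ₀ ≤ Setoid.ker (C ∘ midBot) := fun u v h => hC _ _ (conn_midBot h)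
  refine ⟨Setoid.ker (C ∘ midBot), ?_, Phi_eq_zero fun i => ?_⟩
  · ext u v
    refine ⟨fun h => ?_, conn_mono le_rfl hle⟩
    have := conn_le (β := Setoid.ker (C ∘ midBot)) (S := Setoid.ker C)
      (fun u v huv => hC _ _ (conn_topMid huv)) (fun u v huv => huv) h
    rw [Setoid.ker_def, hC_topBot, hC_topBot] at this
    exact Quotient.exact (s := S) this
  by_cases hf : ClassIn S isMid ⟦midBot (Sum.inl i)⟧
  · refine ⟨_, not_isMid_topBot (Sum.inr z₀), conn_midBot (u := Sum.inl i) (v := Sum.inr z₀) ?_⟩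
    change C _ = C (topBot (Sum.inr z₀))
    rw [hC_topBot]
    exact if_pos hf
  · rw [classIn_mk_iff] at hf
    push Not at hf
    obtain ⟨y, hy, hny⟩ := hf
    exact ⟨y, hny, conn_mono le_rfl hle hy⟩

lemma exists_pmul_eq_and_Phi_eq_zero' (α γ₀ : PM n) : ∃ γ, pmul γ α = pmul γ₀ α ∧ Phi γ α = 0 := by
  obtain ⟨δ, hδ, hΦ⟩ := exists_pmul_eq_and_Phi_eq_zero (pstar α) (pstar γ₀)
  refine ⟨pstar δ, ?_, by rwa [← Phi_pstar, pstar_pstar]⟩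
  simpa only [pstar_pmul, pstar_pstar] using congrArg pstar hδ

instance : Finite (PM n) :=
  Finite.of_injective (fun α : PM n => α.r) fun _ _ h =>
    Setoid.ext fun a b => Iff.of_eq (congrFun₂ h a b)

section GreenPartition

variable {α β : PM n}

lemma greenR_pmul_iff : greenR pmul α β ↔ (∃ γ, pmul α γ = β) ∧ ∃ δ, pmul β δ = α :=
  greenR_iff_exists pmul_assoc pmul_pone

lemma greenL_pmul_iff : greenL pmul α β ↔ (∃ γ, pmul γ α = β) ∧ ∃ δ, pmul δ β = α :=
  greenL_iff_exists pmul_assoc pone_pmul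

lemma rnk_eq_of_greenR (h : greenR pmul α β) : rnk α = rnk β := by
  obtain ⟨⟨γ, rfl⟩, δ, hδ⟩ := greenR_pmul_iff.1 h
  have h₁ := rnk_pmul_le_left (pmul α γ) δ
  rw [hδ] at h₁
  exact le_antisymm h₁ (rnk_pmul_le_left α γ)

lemma rnk_eq_of_greenL (h : greenL pmul α β) : rnk α = rnk β := by
  obtain ⟨⟨γ, rfl⟩, δ, hδ⟩ := greenL_pmul_iff.1 h
  have h₁ := rnk_pmul_le_right δ (pmul γ α)
  rw [hδ] at h₁
  exact le_antisymm h₁ (rnk_pmul_le_right γ α)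

lemma jSet_pmul (α : PM n) : jSet pmul α = {β | rnk β ≤ rnk α} := by
  ext β
  constructor
  · rintro ⟨⟨γ, δ⟩, rfl⟩
    exact (rnk_pmul_le_left _ _).trans (rnk_pmul_le_right _ _)
  · intro h
    obtain ⟨γ, δ, h⟩ := exists_pmul_pmul_eq h
    exact ⟨(γ, δ), h⟩

lemma greenJ_pmul_iff : greenJ pmul α β ↔ rnk α = rnk β := by
  refine ⟨fun h => le_antisymm ?_ ?_, fun h => ?_⟩
  · have hα : α ∈ jSet pmul β := h ▸ (jSet_pmul α).symm ▸ le_refl (rnk α)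
    rwa [jSet_pmul] at hα
  · have hβ : β ∈ jSet pmul α := h.symm ▸ (jSet_pmul β).symm ▸ le_refl (rnk β)
    rwa [jSet_pmul] at hβ
  · rw [greenJ, jSet_pmul, jSet_pmul, h]

lemma greenD_pmul_iff : greenD pmul α β ↔ rnk α = rnk β := by
  refine ⟨fun ⟨_, hR, hL⟩ => (rnk_eq_of_greenR hR).trans (rnk_eq_of_greenL hL), fun h => ?_⟩
  refine greenD_of_mem_jSet pmul_assoc ?_ ?_
  · rw [jSet_pmul]; exact h.le
  · rw [jSet_pmul]; exact h.ge

end GreenPartition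

section GreenTwisted

variable {i j : ℕ} {α β : PM n}

lemma exists_tmul_eq_of_pmul_eq {γ : PM n} (h : pmul α γ = β) (i : ℕ) :
    ∃ c, tmul (i, α) c = (i, β) := by
  obtain ⟨δ, hδ, hΦ⟩ := exists_pmul_eq_and_Phi_eq_zero α γ
  exact ⟨(0, δ), Prod.ext (by simp [tmul, hΦ]) (hδ.trans h)⟩

lemma exists_tmul_eq_of_pmul_eq' {γ : PM n} (h : pmul γ α = β) (i : ℕ) :
    ∃ c, tmul c (i, α) = (i, β) := by
  obtain ⟨δ, hδ, hΦ⟩ := exists_pmul_eq_and_Phi_eq_zero' α γ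
  exact ⟨(0, δ), Prod.ext (by simp [tmul, hΦ]) (hδ.trans h)⟩

lemma greenR_tmul_iff : greenR tmul (i, α) (j, β) ↔ i = j ∧ greenR pmul α β := by
  rw [greenR_iff_exists tmul_assoc tmul_one, greenR_pmul_iff]
  constructor
  · rintro ⟨⟨c, hc⟩, d, hd⟩
    have hi : i + c.1 + Phi α c.2 = j := congrArg Prod.fst hc
    have hj : j + d.1 + Phi β d.2 = i := congrArg Prod.fst hd
    exact ⟨by omega, ⟨c.2, congrArg Prod.snd hc⟩, d.2, congrArg Prod.snd hd⟩
  · rintro ⟨rfl, ⟨γ, hγ⟩, δ, hδ⟩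
    exact ⟨exists_tmul_eq_of_pmul_eq hγ i, exists_tmul_eq_of_pmul_eq hδ i⟩

lemma greenL_tmul_iff : greenL tmul (i, α) (j, β) ↔ i = j ∧ greenL pmul α β := by
  rw [greenL_iff_exists tmul_assoc one_tmul, greenL_pmul_iff]
  constructor
  · rintro ⟨⟨c, hc⟩, d, hd⟩
    have hi : c.1 + i + Phi c.2 α = j := congrArg Prod.fst hc
    have hj : d.1 + j + Phi d.2 β = i := congrArg Prod.fst hd
    exact ⟨by omega, ⟨c.2, congrArg Prod.snd hc⟩, d.2, congrArg Prod.snd hd⟩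
  · rintro ⟨rfl, ⟨γ, hγ⟩, δ, hδ⟩
    exact ⟨exists_tmul_eq_of_pmul_eq' hγ i, exists_tmul_eq_of_pmul_eq' hδ i⟩

lemma greenH_tmul_iff : greenH tmul (i, α) (j, β) ↔ i = j ∧ greenH pmul α β := by
  rw [greenH, greenH, greenR_tmul_iff, greenL_tmul_iff]
  exact ⟨fun ⟨⟨h, hR⟩, _, hL⟩ => ⟨h, hR, hL⟩, fun ⟨h, hR, hL⟩ => ⟨⟨h, hR⟩, h, hL⟩⟩

lemma greenD_tmul_iff : greenD tmul (i, α) (j, β) ↔ i = j ∧ greenD pmul α β := by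
  constructor
  · rintro ⟨⟨k, ζ⟩, hR, hL⟩
    rw [greenR_tmul_iff] at hR
    rw [greenL_tmul_iff] at hL
    exact ⟨hR.1.trans hL.1, ζ, hR.2, hL.2⟩
  · rintro ⟨rfl, ζ, hR, hL⟩
    exact ⟨(i, ζ), greenR_tmul_iff.2 ⟨rfl, hR⟩, greenL_tmul_iff.2 ⟨rfl, hL⟩⟩

lemma jSet_tmul (a : ℕ × PM n) :
    jSet tmul a = {b : ℕ × PM n | a.1 ≤ b.1 ∧ rnk b.2 ≤ rnk a.2} := by
  ext b
  constructor
  · rintro ⟨⟨c, d⟩, rfl⟩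
    refine ⟨by simp only [tmul]; omega, ?_⟩
    exact (rnk_pmul_le_left _ _).trans (rnk_pmul_le_right _ _)
  · obtain ⟨k, β⟩ := b
    rintro ⟨hk, hβ⟩
    obtain ⟨γ₀, δ₀, hγδ⟩ := exists_pmul_pmul_eq hβ
    obtain ⟨γ, hγ, hΦγ⟩ := exists_pmul_eq_and_Phi_eq_zero' a.2 γ₀
    obtain ⟨δ, hδ, hΦδ⟩ := exists_pmul_eq_and_Phi_eq_zero (pmul γ a.2) δ₀
    refine ⟨((k - a.1, γ), (0, δ)), Prod.ext ?_ ?_⟩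
    · simp only [tmul, hΦγ, hΦδ]
      omega
    · simp only [tmul]
      rw [hδ, hγ, hγδ]

lemma greenJ_tmul_iff : greenJ tmul (i, α) (j, β) ↔ i = j ∧ greenJ pmul α β := by
  rw [greenJ_pmul_iff, greenJ, jSet_tmul, jSet_tmul]
  refine ⟨fun h => ?_, fun ⟨hij, hr⟩ => by rw [hij, hr]⟩
  have hα : ((i, α) : ℕ × PM n) ∈ {b : ℕ × PM n | j ≤ b.1 ∧ rnk b.2 ≤ rnk β} :=
    h ▸ ⟨le_rfl, le_rfl⟩
  have hβ : ((j, β) : ℕ × PM n) ∈ {b : ℕ × PM n | i ≤ b.1 ∧ rnk b.2 ≤ rnk α} :=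
    h.symm ▸ ⟨le_rfl, le_rfl⟩
  exact ⟨le_antisymm hβ.1 hα.1, le_antisymm hα.2 hβ.2⟩

end GreenTwisted

theorem green_twisted_general (n : ℕ) :
    (∀ (i j : ℕ) (α β : PM n),
      (greenR (tmul (n := n)) (i, α) (j, β) ↔ i = j ∧ greenR (pmul (n := n)) α β) ∧
      (greenL (tmul (n := n)) (i, α) (j, β) ↔ i = j ∧ greenL (pmul (n := n)) α β) ∧
      (greenJ (tmul (n := n)) (i, α) (j, β) ↔ i = j ∧ greenJ (pmul (n := n)) α β) ∧
      (greenH (tmul (n := n)) (i, α) (j, β) ↔ i = j ∧ greenH (pmul (n := n)) α β) ∧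
      (greenD (tmul (n := n)) (i, α) (j, β) ↔ i = j ∧ greenD (pmul (n := n)) α β)) ∧
    (∀ a b : ℕ × PM n, greenD (tmul (n := n)) a b ↔ greenJ (tmul (n := n)) a b) ∧
    (∀ a b : ℕ × PM n, greenD (tmul (n := n)) a b ↔ (a.1 = b.1 ∧ rnk a.2 = rnk b.2)) ∧
    (∀ a : ℕ × PM n, jSet (tmul (n := n)) a =
      {b : ℕ × PM n | a.1 ≤ b.1 ∧ rnk b.2 ≤ rnk a.2}) ∧
    (∀ q r i j : ℕ, q ≤ n → r ≤ n →
      ({b : ℕ × PM n | i ≤ b.1 ∧ rnk b.2 ≤ q} ⊆ {b : ℕ × PM n | j ≤ b.1 ∧ rnk b.2 ≤ r} ↔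
        (q ≤ r ∧ j ≤ i))) := by
  refine ⟨fun i j α β => ⟨greenR_tmul_iff, greenL_tmul_iff, greenJ_tmul_iff, greenH_tmul_iff,
    greenD_tmul_iff⟩, ?_, ?_, jSet_tmul, ?_⟩
  · rintro ⟨i, α⟩ ⟨j, β⟩
    rw [greenD_tmul_iff, greenJ_tmul_iff, greenD_pmul_iff, greenJ_pmul_iff]
  · rintro ⟨i, α⟩ ⟨j, β⟩
    rw [greenD_tmul_iff, greenD_pmul_iff]
  · intro q r i j hq _
    obtain ⟨α, hα⟩ := exists_rnk_eq (n := n) hq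
    refine ⟨fun h => ?_, fun ⟨hqr, hji⟩ b ⟨hb₁, hb₂⟩ => ⟨hji.trans hb₁, hb₂.trans hqr⟩⟩
    obtain ⟨hji, hqr⟩ := h (show (i, α) ∈ _ from ⟨le_rfl, hα.le⟩)
    exact ⟨hα ▸ hqr, hji⟩

/-- Green's relations on the twisted partition monoid: for each of
`R, L, J, H, D`, `(i,α) K (j,β)` in `P_n^Φ` iff `i = j` and `α K β` in `P_n`.  Moreover
`D = J` in `P_n^Φ`, the `D`-classes are exactly the sets `D_{qi} = {i} × D_q`, the
principal ideal generated by an element of `D_{qi}` is `I_{qi} = {i,i+1,…} × I_q`, and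
`I_{qi} ⊆ I_{rj}` iff `q ≤ r` and `i ≥ j`. -/
theorem green_twisted (n : ℕ) (hn : 1 ≤ n) :
    (∀ (i j : ℕ) (α β : PM n),
      (greenR (tmul (n := n)) (i, α) (j, β) ↔ i = j ∧ greenR (pmul (n := n)) α β) ∧
      (greenL (tmul (n := n)) (i, α) (j, β) ↔ i = j ∧ greenL (pmul (n := n)) α β) ∧
      (greenJ (tmul (n := n)) (i, α) (j, β) ↔ i = j ∧ greenJ (pmul (n := n)) α β) ∧
      (greenH (tmul (n := n)) (i, α) (j, β) ↔ i = j ∧ greenH (pmul (n := n)) α β) ∧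
      (greenD (tmul (n := n)) (i, α) (j, β) ↔ i = j ∧ greenD (pmul (n := n)) α β)) ∧
    (∀ a b : ℕ × PM n, greenD (tmul (n := n)) a b ↔ greenJ (tmul (n := n)) a b) ∧
    (∀ a b : ℕ × PM n, greenD (tmul (n := n)) a b ↔ (a.1 = b.1 ∧ rnk a.2 = rnk b.2)) ∧
    (∀ a : ℕ × PM n, jSet (tmul (n := n)) a =
      {b : ℕ × PM n | a.1 ≤ b.1 ∧ rnk b.2 ≤ rnk a.2}) ∧
    (∀ q r i j : ℕ, q ≤ n → r ≤ n →
      ({b : ℕ × PM n | i ≤ b.1 ∧ rnk b.2 ≤ q} ⊆ {b : ℕ × PM n | j ≤ b.1 ∧ rnk b.2 ≤ r} ↔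
        (q ≤ r ∧ j ≤ i))) :=
  green_twisted_general n

end TPM
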